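/- arXiv:1312.1910 — 2 statements merged into one kernel-verified Lean document; each statement's English description precedes it below -/
import Mathlib

section
/- Let n1 < n2 < n3 be integers and let f(x) = a + bx + cx² be a quadratic polynomial with complex coefficients. Then ∑_{n=n1}^{n3-1} f(n) = w1·f(n1) + w2·f(n2) + w3·f(n3), where w1 = (n3-n1+1)(3n2-2n1-n3+1)/(6(n2-n1)), w2 = (n3-n1)((n3-n1)²-1)/(6(n2-n1)(n3-n2)), and w3 = (n3-n1-1)(n1-3n2+2n3-1)/(6(n3-n2)). -/
/-!
Writing `F` for a discrete antiderivative of the quadratic `f` (so `F (x + 1) - F x = f x`), the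
sum telescopes to `F n₃ - F n₁`. Both sides of the claimed identity are then explicit rational
functions of `n₁, n₂, n₃, a, b, c`, and clearing the denominators `n₂ - n₁` and `n₃ - n₂` turns
the identity into a polynomial one.
-/

open Finset

theorem Int.sum_Ico_sub_eq_sub {M : Type*} [AddCommGroup M] (F : ℤ → M) {m n : ℤ} (hmn : m ≤ n) :
    ∑ i ∈ Ico m n, (F (i + 1) - F i) = F n - F m := by
  induction n, hmn using Int.leInduction with
  | base => simp
  | succ k hmk ih =>
    rw [← sum_Ico_add_eq_sum_Ico_add_one hmk, ih]
    abel

section Quadratic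

variable {K : Type*} [Field K] [CharZero K] (a b c : K)

/-- At `x = N` this is `∑_{i < N} (a + b i + c i²)`, by the Faulhaber formulas for `∑ 1`, `∑ i`,
`∑ i²`. -/
def quadraticAntidiff (x : K) : K :=
  a * x + b * (x * (x - 1) / 2) + c * (x * (x - 1) * (2 * x - 1) / 6)

theorem quadraticAntidiff_add_one_sub (x : K) :
    quadraticAntidiff a b c (x + 1) - quadraticAntidiff a b c x = a + b * x + c * x ^ 2 := by
  unfold quadraticAntidiff
  ring

theorem Int.sum_Ico_quadratic {m n : ℤ} (hmn : m ≤ n) :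
    ∑ i ∈ Ico m n, (a + b * i + c * (i : K) ^ 2) =
      quadraticAntidiff a b c (n : K) - quadraticAntidiff a b c (m : K) := by
  simp_rw [← quadraticAntidiff_add_one_sub a b c]
  exact_mod_cast Int.sum_Ico_sub_eq_sub (fun i : ℤ => quadraticAntidiff a b c (i : K)) hmn

end Quadratic

theorem stmt_7 (n1 n2 n3 : ℤ) (h12 : n1 < n2) (h23 : n2 < n3)
    (a b c : ℂ) (f : ℤ → ℂ) (hf : ∀ n : ℤ, f n = a + b * n + c * (n : ℂ) ^ 2)
    (w1 w2 w3 : ℂ)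
    (hw1 : w1 = ((n3 : ℂ) - n1 + 1) * (3 * (n2 : ℂ) - 2 * n1 - n3 + 1) /
        (6 * ((n2 : ℂ) - n1)))
    (hw2 : w2 = ((n3 : ℂ) - n1) * (((n3 : ℂ) - n1) ^ 2 - 1) /
        (6 * ((n2 : ℂ) - n1) * ((n3 : ℂ) - n2)))
    (hw3 : w3 = ((n3 : ℂ) - n1 - 1) * ((n1 : ℂ) - 3 * n2 + 2 * n3 - 1) /
        (6 * ((n3 : ℂ) - n2))) :
    ∑ n ∈ Finset.Ico n1 n3, f n = w1 * f n1 + w2 * f n2 + w3 * f n3 := by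
  have h21 : (n2 : ℂ) - n1 ≠ 0 := sub_ne_zero.mpr (by exact_mod_cast h12.ne')
  have h32 : (n3 : ℂ) - n2 ≠ 0 := sub_ne_zero.mpr (by exact_mod_cast h23.ne')
  simp_rw [hf]
  rw [Int.sum_Ico_quadratic a b c (h12.trans h23).le, hw1, hw2, hw3]
  unfold quadraticAntidiff
  field_simp
  ring
end

section
/- For a > 0 and 0 < x < 2, the series 1/a + (2/a)∑_{n=1}^{∞} cos(nπx)/((nπ/a)² + 1) converges to cosh(a(1-x))/sinh(a). -/
/-! The `2`-periodic extension of `t ↦ cosh (a (1 - t))` from `[0, 2)` is continuous because `cosh`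
is even, and writing `cosh` as a sum of two exponentials gives its Fourier coefficients
`a sinh a / (a² + π² n²)`. These are summable, so the Fourier series converges pointwise to the
function; taking real parts and folding the even `ℤ`-indexed series onto `ℕ` gives the claim. -/

open Real Complex

lemma integral_exp_sub_pi_int_mul_I {b : ℝ} (hb : b ≠ 0) (n : ℤ) :
    ∫ t in (0 : ℝ)..2, cexp ((b - π * n * I) * t) = (cexp (2 * b) - 1) / (b - π * n * I) := by
  have hc : (b : ℂ) - π * n * I ≠ 0 := fun h => hb (by simpa using congrArg re h)
  rw [integral_exp_mul_complex hc]
  congr 1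
  rw [show ((b : ℂ) - π * n * I) * ((2 : ℝ) : ℂ) = 2 * b + (-n : ℤ) * (2 * π * I) by push_cast; ring,
    Complex.exp_add, exp_int_mul_two_pi_mul_I]
  simp

instance : Fact ((0 : ℝ) < 2) := ⟨two_pos⟩

noncomputable def periodizedCosh (a : ℝ) : C(AddCircle (2 : ℝ), ℂ) :=
  ⟨AddCircle.liftIco 2 0 fun t => (Real.cosh (a * (1 - t)) : ℂ),
    AddCircle.liftIco_continuous
      (by rw [show a * (1 - (0 + 2)) = -(a * (1 - 0)) by ring, Real.cosh_neg]) (by fun_prop)⟩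

lemma periodizedCosh_coe_apply (a : ℝ) {x : ℝ} (hx : x ∈ Set.Ico 0 2) :
    periodizedCosh a x = Real.cosh (a * (1 - x)) :=
  AddCircle.liftIco_coe_apply (f := fun t => (Real.cosh (a * (1 - t)) : ℂ)) (by simpa using hx)

lemma fourierCoeff_periodizedCosh {a : ℝ} (ha : a ≠ 0) (n : ℤ) :
    fourierCoeff (periodizedCosh a) n = ((a * Real.sinh a / (a ^ 2 + π ^ 2 * n ^ 2) : ℝ) : ℂ) := by
  have hsplit : ∀ t : ℝ, fourier (-n) (t : AddCircle (0 + 2 - 0 : ℝ)) • (Real.cosh (a * (1 - t)) : ℂ) =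
      cexp a / 2 * cexp ((↑(-a) - π * n * I) * t) + cexp (-a) / 2 * cexp ((a - π * n * I) * t) := by
    intro t
    rw [fourier_coe_apply, smul_eq_mul, ofReal_cosh, Complex.cosh, mul_div_assoc', mul_add, add_div,
      div_mul_eq_mul_div, div_mul_eq_mul_div, ← Complex.exp_add, ← Complex.exp_add,
      ← Complex.exp_add, ← Complex.exp_add]
    congr 3 <;> push_cast <;> ring
  rw [periodizedCosh, ContinuousMap.coe_mk, fourierCoeff_liftIco_eq, fourierCoeffOn_eq_integral]
  simp_rw [hsplit]
  rw [intervalIntegral.integral_add (by apply Continuous.intervalIntegrable; fun_prop)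
    (by apply Continuous.intervalIntegrable; fun_prop), intervalIntegral.integral_const_mul,
    intervalIntegral.integral_const_mul]
  simp only [zero_add, sub_zero]
  rw [integral_exp_sub_pi_int_mul_I ha, integral_exp_sub_pi_int_mul_I (neg_ne_zero.2 ha)]
  have h₁ : (-a : ℂ) - π * n * I ≠ 0 := fun h => ha (by simpa using congrArg re h)
  have h₂ : (a : ℂ) - π * n * I ≠ 0 := fun h => ha (by simpa using congrArg re h)
  have hden : ((a ^ 2 + π ^ 2 * n ^ 2 : ℝ) : ℂ) = -((-a - π * n * I) * (a - π * n * I)) := by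
    push_cast; linear_combination (π ^ 2 * n ^ 2 : ℂ) * I_sq
  rw [Complex.real_smul, ofReal_div (a * Real.sinh a), hden]
  push_cast
  rw [Complex.sinh, Complex.exp_neg, show (2 : ℂ) * -a = -a + -a by ring,
    show (2 : ℂ) * a = a + a by ring, Complex.exp_add, Complex.exp_add, Complex.exp_neg]
  have hE : cexp a ≠ 0 := Complex.exp_ne_zero _
  field_simp
  ring

lemma summable_inv_add_mul_sq {c d : ℝ} (hc : 0 ≤ c) (hd : 0 < d) :
    Summable fun n : ℤ => (c + d * n ^ 2)⁻¹ := by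
  refine .of_norm_bounded_eventually ((summable_one_div_int_pow.mpr one_lt_two).mul_left d⁻¹) ?_
  filter_upwards [Filter.eventually_cofinite_ne 0] with n hn
  have hn2 : (0 : ℝ) < n ^ 2 := by positivity
  rw [Real.norm_of_nonneg (by positivity), mul_one_div, div_eq_inv_mul, ← mul_inv]
  exact inv_anti₀ (by positivity) (by linarith)

lemma HasSum.nat_succ_of_even {G : Type*} [AddCommGroup G] [TopologicalSpace G]
    [IsTopologicalAddGroup G] {f : ℤ → G} {s : G} (hf : HasSum f s) (heven : f.Even) :
    HasSum (fun n : ℕ => 2 • f (n + 1)) (s - f 0) := by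
  have h := hf.nat_add_neg
  simp only [heven _, ← two_nsmul] at h
  simpa [two_nsmul] using (hasSum_nat_add_iff' 1).mpr h

lemma hasSum_int_periodizedCosh {a : ℝ} (ha : a ≠ 0) {x : ℝ} (hx : x ∈ Set.Ico 0 2) :
    HasSum (fun n : ℤ => a * Real.sinh a / (a ^ 2 + π ^ 2 * n ^ 2) * Real.cos (π * n * x))
      (Real.cosh (a * (1 - x))) := by
  have hsum : Summable (fourierCoeff (periodizedCosh a)) := by
    simp_rw [funext (fourierCoeff_periodizedCosh ha), Complex.summable_ofReal, div_eq_mul_inv]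
    exact (summable_inv_add_mul_sq (sq_nonneg a) (by positivity)).mul_left _
  have h := Complex.hasSum_re (has_pointwise_sum_fourier_series_of_summable hsum x)
  rw [periodizedCosh_coe_apply a hx, ofReal_re] at h
  refine h.congr_fun fun n => ?_
  rw [fourierCoeff_periodizedCosh ha, fourier_coe_apply, smul_eq_mul, re_ofReal_mul,
    show 2 * π * I * n * x / (2 : ℝ) = (π * n * x : ℝ) * I by push_cast; ring, exp_ofReal_mul_I_re]

theorem stmt_11 (a : ℝ) (ha : 0 < a) (x : ℝ) (hx0 : 0 < x) (hx2 : x < 2) :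
    HasSum (fun n : ℕ =>
        (2 / a) * Real.cos ((n + 1) * Real.pi * x) /
          (((n + 1) * Real.pi / a) ^ 2 + 1))
      (Real.cosh (a * (1 - x)) / Real.sinh a - 1 / a) := by
  have hsinh : 0 < Real.sinh a := Real.sinh_pos_iff.mpr ha
  have h := ((hasSum_int_periodizedCosh ha.ne' ⟨hx0.le, hx2⟩).nat_succ_of_even fun n => by
    simp).div_const (Real.sinh a)
  have hval : (Real.cosh (a * (1 - x)) - a * Real.sinh a / (a ^ 2 + π ^ 2 * (0 : ℤ) ^ 2) *
      Real.cos (π * (0 : ℤ) * x)) / Real.sinh a = Real.cosh (a * (1 - x)) / Real.sinh a - 1 / a := by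
    simp only [Int.cast_zero, mul_zero, zero_mul, Real.cos_zero]
    field_simp
    ring
  rw [hval] at h
  refine h.congr_fun fun n => ?_
  have hden : 0 < a ^ 2 + π ^ 2 * ((n : ℝ) + 1) ^ 2 := by positivity
  rw [nsmul_eq_mul]
  push_cast
  field_simp
  ring
end
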